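/- arXiv:1702.06314 — 8 statements merged into one kernel-verified Lean document; each statement's English description precedes it below -/
import Mathlib

section
/- Let Σ = (X, 𝒟, φ) be a system and A ⊆ X any nonempty set. Then A is uniformly globally stable if and only if A is both uniformly (locally) stable and Lagrange stable. -/
open scoped NNReal ENNReal
open Filter Topology Bornology

noncomputable section

/-- Functions of class 𝒦: continuous, strictly increasing, vanishing at zero. -/
def ClassK (γ : ℝ≥0 → ℝ≥0) : Prop :=
  Continuous γ ∧ StrictMono γ ∧ γ 0 = 0

/-- Functions of class 𝒦∞: class 𝒦 and unbounded. -/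
def ClassKinf (γ : ℝ≥0 → ℝ≥0) : Prop :=
  ClassK γ ∧ ∀ M : ℝ≥0, ∃ r : ℝ≥0, M < γ r

/-- Functions of class 𝒦ℒ. -/
def ClassKL (β : ℝ≥0 → ℝ≥0 → ℝ≥0) : Prop :=
  Continuous (fun p : ℝ≥0 × ℝ≥0 => β p.1 p.2) ∧
  (∀ t : ℝ≥0, ClassK fun r => β r t) ∧
  ∀ r : ℝ≥0, 0 < r →
    StrictAnti (fun t => β r t) ∧ Tendsto (fun t => β r t) atTop (𝓝 0)

/-- Distance of a point to a set, `‖x‖_A`. -/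
def dA {X : Type*} [NormedAddCommGroup X] (A : Set X) (x : X) : ℝ≥0 :=
  (Metric.infDist x A).toNNReal

/-- The open ε-neighborhood `B_ε(A)` of a set. -/
def ballSet {X : Type*} [NormedAddCommGroup X] (ε : ℝ≥0) (A : Set X) : Set X :=
  {x | dA A x < ε}

/-- A (time-invariant) control system with disturbances. -/
structure System (X : Type*) [NormedAddCommGroup X] [NormedSpace ℝ X]
    (W : Type*) [NormedAddCommGroup W] [NormedSpace ℝ W] where
  /-- the set of disturbance values -/
  D : Set W
  D_nonempty : D.Nonempty
  /-- the space of disturbances -/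
  Dist : Set (ℝ≥0 → W)
  dist_mem : ∀ d ∈ Dist, ∀ t : ℝ≥0, d t ∈ D
  /-- axiom of shift invariance -/
  shift_invariant : ∀ d ∈ Dist, ∀ τ : ℝ≥0, (fun t => d (t + τ)) ∈ Dist
  /-- axiom of concatenation -/
  concat_mem : ∀ d₁ ∈ Dist, ∀ d₂ ∈ Dist, ∀ t : ℝ≥0, 0 < t →
      (fun s => if s ≤ t then d₁ s else d₂ (s - t)) ∈ Dist
  /-- the transition map -/
  φ : ℝ≥0 → X → (ℝ≥0 → W) → X
  identity : ∀ (x : X), ∀ d ∈ Dist, φ 0 x d = x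
  causality : ∀ (t : ℝ≥0) (x : X), ∀ d ∈ Dist, ∀ d' ∈ Dist,
      (∀ s ≤ t, d s = d' s) → φ t x d = φ t x d'
  cont : ∀ (x : X), ∀ d ∈ Dist, Continuous fun t : ℝ≥0 => φ t x d
  cocycle : ∀ (t h : ℝ≥0) (x : X), ∀ d ∈ Dist,
      φ h (φ t x d) (fun s => d (t + s)) = φ (t + h) x d

namespace System

variable {X : Type*} [NormedAddCommGroup X] [NormedSpace ℝ X]
variable {W : Type*} [NormedAddCommGroup W] [NormedSpace ℝ W]
variable (S : System X W)

/-- Reachability set within time `T`. -/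
def RT (T : ℝ≥0) (B : Set X) : Set X :=
  {y | ∃ t ≤ T, ∃ d ∈ S.Dist, ∃ x ∈ B, y = S.φ t x d}

/-- Reachability set. -/
def R (B : Set X) : Set X :=
  {y | ∃ t : ℝ≥0, ∃ d ∈ S.Dist, ∃ x ∈ B, y = S.φ t x d}

/-- Robust forward completeness. -/
def RFC : Prop :=
  ∀ C : ℝ≥0, 0 < C → ∀ τ : ℝ≥0, 0 < τ →
    IsBounded (S.RT τ {x : X | ‖x‖₊ ≤ C})

/-- Invariance of a set. -/
def Invariant (A : Set X) : Prop := S.R A ⊆ A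

/-- Robust invariance of a set. -/
def RobustlyInvariant (A : Set X) : Prop :=
  S.Invariant A ∧
  ∀ ε : ℝ≥0, 0 < ε → ∀ h : ℝ≥0, 0 < h → ∃ δ : ℝ≥0, 0 < δ ∧
    ∀ t : ℝ≥0, t ≤ h → ∀ x : X, dA A x ≤ δ → ∀ d ∈ S.Dist, dA A (S.φ t x d) ≤ ε

/-- Lagrange stability of a set. -/
def LagrangeStable (A : Set X) : Prop :=
  ∃ σ : ℝ≥0 → ℝ≥0, ClassKinf σ ∧ ∃ c : ℝ≥0, 0 < c ∧
    ∀ (x : X), ∀ d ∈ S.Dist, ∀ t : ℝ≥0, dA A (S.φ t x d) ≤ σ (dA A x) + c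

/-- Uniform (local) stability of a set. -/
def ULS (A : Set X) : Prop :=
  ∀ ε : ℝ≥0, 0 < ε → ∃ δ : ℝ≥0, 0 < δ ∧
    ∀ x : X, dA A x ≤ δ → ∀ d ∈ S.Dist, ∀ t : ℝ≥0, dA A (S.φ t x d) ≤ ε

/-- Uniform global stability of a set. -/
def UGS (A : Set X) : Prop :=
  ∃ σ : ℝ≥0 → ℝ≥0, ClassKinf σ ∧
    ∀ (x : X), ∀ d ∈ S.Dist, ∀ t : ℝ≥0, dA A (S.φ t x d) ≤ σ (dA A x)

/-- Uniform global asymptotic stability of a set. -/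
def UGAS (A : Set X) : Prop :=
  ∃ β : ℝ≥0 → ℝ≥0 → ℝ≥0, ClassKL β ∧
    ∀ (x : X), ∀ d ∈ S.Dist, ∀ t : ℝ≥0, dA A (S.φ t x d) ≤ β (dA A x) t

/-- Practical uniform global asymptotic stability of a set. -/
def PUGASSet (A : Set X) : Prop :=
  ∃ β : ℝ≥0 → ℝ≥0 → ℝ≥0, ClassKL β ∧ ∃ c : ℝ≥0, 0 < c ∧
    ∀ (x : X), ∀ d ∈ S.Dist, ∀ t : ℝ≥0, dA A (S.φ t x d) ≤ β (dA A x) t + c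

/-- Global weak attractivity of a set. -/
def GWA (A : Set X) : Prop :=
  ∀ (x : X), ∀ d ∈ S.Dist, ∀ ε : ℝ≥0, 0 < ε → ∃ t : ℝ≥0, dA A (S.φ t x d) ≤ ε

/-- Uniform global weak attractivity of a set. -/
def UGWA (A : Set X) : Prop :=
  ∀ ε : ℝ≥0, 0 < ε → ∀ r : ℝ≥0, 0 < r → ∃ τ : ℝ≥0,
    ∀ x : X, dA A x ≤ r → ∀ d ∈ S.Dist, ∃ t ≤ τ, dA A (S.φ t x d) ≤ ε

/-- Uniform global attractivity of a set. -/
def UGATT (A : Set X) : Prop :=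
  ∀ ε : ℝ≥0, 0 < ε → ∀ r : ℝ≥0, 0 < r → ∃ τ : ℝ≥0,
    ∀ x : X, dA A x ≤ r → ∀ d ∈ S.Dist, ∀ t : ℝ≥0, τ ≤ t → dA A (S.φ t x d) ≤ ε

/-- Uniform ultimate boundedness of the system. -/
def UUB : Prop :=
  ∃ K : ℝ≥0, 0 < K ∧ ∀ r : ℝ≥0, 0 < r → ∃ T : ℝ≥0,
    ∀ x : X, ‖x‖₊ ≤ r → ∀ d ∈ S.Dist, ∀ t : ℝ≥0, T ≤ t → ‖S.φ t x d‖₊ ≤ K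

/-- Global recurrence of a set. -/
def GloballyRecurrent (A : Set X) : Prop :=
  ∀ (x : X), ∀ d ∈ S.Dist, ∃ t : ℝ≥0, S.φ t x d ∈ A

/-- Uniform global recurrence of a set. -/
def UniformlyGloballyRecurrent (A : Set X) : Prop :=
  ∀ R : ℝ≥0, 0 < R → ∃ τ : ℝ≥0,
    ∀ x : X, dA A x ≤ R → ∀ d ∈ S.Dist, ∃ t ≤ τ, S.φ t x d ∈ A

/-- The set `P₊(A) = ⋂_{ε>0} ℛ(B_ε(A))`. -/
def Pplus (A : Set X) : Set X := ⋂ (ε : ℝ≥0) (_ : 0 < ε), S.R (ballSet ε A)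

/-- Non-coercive Lyapunov function w.r.t. a bounded set `A`. -/
def NonCoerciveLyapunov (A : Set X) (V : X → ℝ) : Prop :=
  Continuous V ∧ (∀ x : X, 0 ≤ V x) ∧ (∀ x ∈ A, V x = 0) ∧
  (∃ ψ₂ : ℝ≥0 → ℝ≥0, ClassKinf ψ₂ ∧
    ∀ x ∉ A, 0 < V x ∧ V x ≤ (ψ₂ (dA A x) : ℝ)) ∧
  (∃ α : ℝ≥0 → ℝ≥0, ClassK α ∧ ∀ x ∉ A, ∀ d ∈ S.Dist,
    Filter.liminf (fun t : ℝ≥0 => (V (S.φ t x d) - V x) / (t : ℝ))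
      (𝓝[>] (0 : ℝ≥0)) ≤ -(α (dA A x) : ℝ))

/-- The system is Lagrange stable if some bounded nonempty set is Lagrange stable. -/
def SystemLagrangeStable : Prop :=
  ∃ A : Set X, A.Nonempty ∧ IsBounded A ∧ S.LagrangeStable A

/-- The system is pUGAS if some bounded nonempty set is pUGAS. -/
def SystemPUGAS : Prop :=
  ∃ A : Set X, A.Nonempty ∧ IsBounded A ∧ S.PUGASSet A

end System

/-!
For the nontrivial direction let `g r` be the supremum of `‖φ(t,x,d)‖_A` over all `t`, `d` and
`‖x‖_A ≤ r`. Lagrange stability makes `g` finite, hence monotone, and ULS makes `g r → 0` as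
`r → 0`. Such a `g` is dominated by the `𝒦∞` function `r ↦ r + ∫₁² g (u r) du`: it lies between
`r + g r` and `r + g (2r)`, and is continuous since it equals `r + r⁻¹ ∫_r^{2r} g` for `r > 0`.
-/

open Set MeasureTheory intervalIntegral

section Majorant

variable {G : ℝ → ℝ}

lemma le_integral_comp_mul_one_two (hG : Monotone G) {r : ℝ} (hr : 0 ≤ r) :
    G r ≤ ∫ u in (1 : ℝ)..2, G (u * r) := by
  have hconst : ∫ _ in (1 : ℝ)..2, G r = G r := by norm_num
  rw [← hconst]
  refine integral_mono_on (by norm_num) intervalIntegrable_const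
    (hG.comp (monotone_mul_right_of_nonneg hr)).intervalIntegrable fun u hu => ?_
  exact hG (le_mul_of_one_le_left hr hu.1)

lemma integral_comp_mul_one_two_le (hG : Monotone G) {r : ℝ} (hr : 0 ≤ r) :
    ∫ u in (1 : ℝ)..2, G (u * r) ≤ G (2 * r) := by
  have hconst : ∫ _ in (1 : ℝ)..2, G (2 * r) = G (2 * r) := by norm_num
  rw [← hconst]
  refine integral_mono_on (by norm_num)
    (hG.comp (monotone_mul_right_of_nonneg hr)).intervalIntegrable intervalIntegrable_const
    fun u hu => ?_
  exact hG (mul_le_mul_of_nonneg_right hu.2 hr)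

lemma monotoneOn_integral_comp_mul_one_two (hG : Monotone G) :
    MonotoneOn (fun r => ∫ u in (1 : ℝ)..2, G (u * r)) (Ici 0) := by
  intro r₁ hr₁ r₂ hr₂ h
  refine integral_mono_on (by norm_num)
    (hG.comp (monotone_mul_right_of_nonneg hr₁)).intervalIntegrable
    (hG.comp (monotone_mul_right_of_nonneg hr₂)).intervalIntegrable fun u hu => ?_
  exact hG (mul_le_mul_of_nonneg_left h (by linarith [hu.1]))

lemma integral_comp_mul_one_two_eq (hG : Monotone G) {r : ℝ} (hr : r ≠ 0) :
    ∫ u in (1 : ℝ)..2, G (u * r) =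
      r⁻¹ * ((∫ s in (0 : ℝ)..2 * r, G s) - ∫ s in (0 : ℝ)..r, G s) := by
  rw [integral_comp_mul_right G hr, integral_interval_sub_left hG.intervalIntegrable
    hG.intervalIntegrable, one_mul, smul_eq_mul]

lemma continuousOn_integral_comp_mul_one_two (hG : Monotone G) (hG_cont : ContinuousAt G 0) :
    ContinuousOn (fun r => ∫ u in (1 : ℝ)..2, G (u * r)) (Ici 0) := by
  intro r hr
  rcases (mem_Ici.mp hr).eq_or_lt with rfl | hpos
  · have hf0 : ∫ u in (1 : ℝ)..2, G (u * 0) = G 0 := by norm_num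
    have hlower : Tendsto G (𝓝[≥] 0) (𝓝 (G 0)) := hG_cont.tendsto.mono_left nhdsWithin_le_nhds
    have hupper : Tendsto (fun r => G (2 * r)) (𝓝[≥] 0) (𝓝 (G 0)) := by
      have h2 : Tendsto (fun r : ℝ => 2 * r) (𝓝 0) (𝓝 0) := by
        simpa using (continuous_const_mul (2 : ℝ)).tendsto 0
      exact (hG_cont.tendsto.comp h2).mono_left nhdsWithin_le_nhds
    rw [ContinuousWithinAt, hf0]
    refine tendsto_of_tendsto_of_tendsto_of_le_of_le' hlower hupper ?_ ?_ <;>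
      filter_upwards [self_mem_nhdsWithin] with s hs
    · exact le_integral_comp_mul_one_two hG hs
    · exact integral_comp_mul_one_two_le hG hs
  · have hP : Continuous fun x => ∫ s in (0 : ℝ)..x, G s :=
      continuous_primitive (fun _ _ => hG.intervalIntegrable) 0
    have hformula : ContinuousAt
        (fun r => r⁻¹ * ((∫ s in (0 : ℝ)..2 * r, G s) - ∫ s in (0 : ℝ)..r, G s)) r :=
      (continuousAt_inv₀ hpos.ne').mul
        ((hP.comp (continuous_const_mul 2)).sub hP).continuousAt
    refine (hformula.congr ?_).continuousWithinAt
    filter_upwards [lt_mem_nhds hpos] with s hs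
    exact (integral_comp_mul_one_two_eq hG hs.ne').symm

end Majorant

theorem exists_classKinf_ge {g : ℝ≥0 → ℝ≥0} (hg : Monotone g) (hg0 : Tendsto g (𝓝 0) (𝓝 0)) :
    ∃ η : ℝ≥0 → ℝ≥0, ClassKinf η ∧ ∀ r, g r ≤ η r := by
  have hg_zero : g 0 = 0 :=
    tendsto_nhds_unique (tendsto_pure_nhds g 0) (hg0.mono_left (pure_le_nhds 0))
  set G : ℝ → ℝ := fun s => g s.toNNReal
  have hG : Monotone G := fun a b h => NNReal.coe_le_coe.2 (hg (Real.toNNReal_mono h))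
  have hG_cont : ContinuousAt G 0 := by
    have htoNNReal : Tendsto Real.toNNReal (𝓝 0) (𝓝 0) := by
      simpa using continuous_real_toNNReal.tendsto 0
    simpa [ContinuousAt, G, hg_zero, Function.comp_def] using
      (NNReal.tendsto_coe.2 hg0).comp htoNNReal
  set I : ℝ → ℝ := fun r => ∫ u in (1 : ℝ)..2, G (u * r)
  have hI : Continuous fun r : ℝ≥0 => (I r).toNNReal :=
    continuous_real_toNNReal.comp <|
      (continuousOn_integral_comp_mul_one_two hG hG_cont).comp_continuous
        NNReal.continuous_coe fun r => r.coe_nonneg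
  have hImono : Monotone fun r : ℝ≥0 => (I r).toNNReal := fun r₁ r₂ h =>
    Real.toNNReal_mono <| monotoneOn_integral_comp_mul_one_two hG r₁.coe_nonneg r₂.coe_nonneg h
  refine ⟨fun r => r + (I r).toNNReal, ⟨⟨continuous_id.add hI, strictMono_id.add_monotone hImono,
    by simp [I, G, hg_zero]⟩, fun M => ⟨M + 1, ?_⟩⟩, fun r => ?_⟩
  · exact (lt_add_one M).trans_le le_self_add
  · have hgI : (g r : ℝ) ≤ I r := by
      simpa [G] using le_integral_comp_mul_one_two hG r.coe_nonneg
    have := Real.toNNReal_le_toNNReal hgI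
    rw [Real.toNNReal_coe] at this
    exact this.trans le_add_self

namespace System

variable {X : Type*} [NormedAddCommGroup X] [NormedSpace ℝ X]
variable {W : Type*} [NormedAddCommGroup W] [NormedSpace ℝ W]
variable {S : System X W} {A : Set X}

lemma UGS.uls (h : S.UGS A) : S.ULS A := by
  obtain ⟨σ, ⟨⟨hσc, hσm, hσ0⟩, -⟩, hσ⟩ := h
  intro ε hε
  have hsmall : ∀ᶠ r in 𝓝[>] 0, σ r < ε ∧ 0 < r :=
    ((hσ0 ▸ hσc.tendsto 0).eventually (gt_mem_nhds hε)).filter_mono nhdsWithin_le_nhds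
      |>.and self_mem_nhdsWithin
  obtain ⟨δ, hσδ, hδ⟩ := hsmall.exists
  exact ⟨δ, hδ, fun x hx d hd t => (hσ x d hd t).trans ((hσm.monotone hx).trans hσδ.le)⟩

lemma UGS.lagrangeStable (h : S.UGS A) : S.LagrangeStable A := by
  obtain ⟨σ, hσ, hbound⟩ := h
  exact ⟨σ, hσ, 1, one_pos, fun x d hd t => (hbound x d hd t).trans le_self_add⟩

-- `sSup` of an unbounded set is `0` in `ℝ≥0`: this is meaningful only under Lagrange stability.
variable (S A) in
def reachRadius (r : ℝ≥0) : ℝ≥0 :=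
  sSup (dA A '' S.R {x | dA A x ≤ r})

lemma LagrangeStable.bddAbove_dA_image_R (h : S.LagrangeStable A) (r : ℝ≥0) :
    BddAbove (dA A '' S.R {x | dA A x ≤ r}) := by
  obtain ⟨σ, hσ, c, -, hbound⟩ := h
  refine ⟨σ r + c, ?_⟩
  rintro _ ⟨_, ⟨t, d, hd, x, hx, rfl⟩, rfl⟩
  exact (hbound x d hd t).trans (add_le_add_left (hσ.1.2.1.monotone hx) c)

lemma LagrangeStable.dA_φ_le_reachRadius (h : S.LagrangeStable A) (x : X) {d : ℝ≥0 → W}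
    (hd : d ∈ S.Dist) (t : ℝ≥0) : dA A (S.φ t x d) ≤ S.reachRadius A (dA A x) :=
  le_csSup (h.bddAbove_dA_image_R _) ⟨_, ⟨t, d, hd, x, le_refl (dA A x), rfl⟩, rfl⟩

lemma LagrangeStable.monotone_reachRadius (h : S.LagrangeStable A) :
    Monotone (S.reachRadius A) := by
  intro r₁ r₂ hr
  refine csSup_le_csSup' (h.bddAbove_dA_image_R r₂) (image_mono ?_)
  rintro _ ⟨t, d, hd, x, hx, rfl⟩
  exact ⟨t, d, hd, x, hx.trans hr, rfl⟩

lemma ULS.tendsto_reachRadius (h : S.ULS A) : Tendsto (S.reachRadius A) (𝓝 0) (𝓝 0) := by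
  refine tendsto_order.2 ⟨fun a ha => absurd ha zero_le.not_gt, fun ε hε => ?_⟩
  obtain ⟨δ, hδ, hstable⟩ := h (ε / 2) (half_pos hε)
  filter_upwards [Iic_mem_nhds hδ] with r hr
  refine (csSup_le' ?_).trans_lt (half_lt_self hε)
  rintro _ ⟨_, ⟨t, d, hd, x, hx, rfl⟩, rfl⟩
  exact hstable x (le_trans hx hr) d hd t

lemma ULS.ugs (h : S.ULS A) (hL : S.LagrangeStable A) : S.UGS A := by
  obtain ⟨η, hη, hge⟩ := exists_classKinf_ge hL.monotone_reachRadius h.tendsto_reachRadius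
  exact ⟨η, hη, fun x d hd t => (hL.dA_φ_le_reachRadius x hd t).trans (hge _)⟩

end System

theorem stmt1_general {X : Type*} [NormedAddCommGroup X] [NormedSpace ℝ X]
    {W : Type*} [NormedAddCommGroup W] [NormedSpace ℝ W] (S : System X W) (A : Set X) :
    S.UGS A ↔ S.ULS A ∧ S.LagrangeStable A :=
  ⟨fun h => ⟨h.uls, h.lagrangeStable⟩, fun ⟨hULS, hL⟩ => hULS.ugs hL⟩

/-- UGS iff ULS together with Lagrange stability. -/
theorem stmt1 {X : Type*} [NormedAddCommGroup X] [NormedSpace ℝ X]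
    {W : Type*} [NormedAddCommGroup W] [NormedSpace ℝ W] (S : System X W) (A : Set X) (hA : A.Nonempty) :
    S.UGS A ↔ S.ULS A ∧ S.LagrangeStable A :=
  stmt1_general S A
end
end

section
/- Let Σ = (X, 𝒟, φ) be a system. Then Σ is robustly forward complete if and only if there exists a continuous function μ : [0,∞) × [0,∞) → [0,∞), increasing with respect to the componentwise order (r₁ ≤ r₂ and t₁ ≤ t₂ imply μ(r₁,t₁) ≤ μ(r₂,t₂)), such that ‖φ(t,x,d)‖ ≤ μ(‖x‖, t) for all x ∈ X, d ∈ 𝒟 and t ≥ 0. -/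
open scoped NNReal ENNReal
open Filter Topology Bornology

noncomputable section

/-- Any monotone `g : ℝ≥0 → ℝ≥0` admits a continuous monotone real majorant. -/
lemma exists_cont_mono_majorant (g : ℝ≥0 → ℝ≥0) (gmono : Monotone g) :
    ∃ f : ℝ → ℝ, Continuous f ∧ Monotone f ∧ ∀ s : ℝ, (g s.toNNReal : ℝ) ≤ f s := by
  set gR : ℝ → ℝ := fun s => (g s.toNNReal : ℝ) with hgR
  have hgRmono : Monotone gR := fun a b h => NNReal.coe_le_coe.mpr (gmono (Real.toNNReal_mono h))
  have hInt : ∀ a b : ℝ, IntervalIntegrable gR MeasureTheory.volume a b :=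
    fun a b => (hgRmono.monotoneOn _).intervalIntegrable
  set F : ℝ → ℝ := fun x => ∫ t in (0:ℝ)..x, gR t with hF
  have hFcont : Continuous F := intervalIntegral.continuous_primitive hInt 0
  refine ⟨fun s => F (s + 2) - F (s + 1), ?_, ?_, ?_⟩
  · exact (hFcont.comp (continuous_id.add continuous_const)).sub
      (hFcont.comp (continuous_id.add continuous_const))
  · have hfint : ∀ s : ℝ, F (s + 2) - F (s + 1) = ∫ t in (s+1)..(s+2), gR t := fun s =>
      intervalIntegral.integral_interval_sub_left (hInt 0 (s+2)) (hInt 0 (s+1))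
    intro a b hab
    simp only [hfint]
    have ha : (∫ t in (a+1)..(a+2), gR t) = ∫ x in (0:ℝ)..1, gR (x + (a+1)) := by
      rw [intervalIntegral.integral_comp_add_right gR (a+1)]
      ring_nf
    have hb : (∫ t in (b+1)..(b+2), gR t) = ∫ x in (0:ℝ)..1, gR (x + (b+1)) := by
      rw [intervalIntegral.integral_comp_add_right gR (b+1)]
      ring_nf
    rw [ha, hb]
    refine intervalIntegral.integral_mono_on zero_le_one ?_ ?_ ?_
    · exact ((hgRmono.comp (monotone_id.add_const _)).monotoneOn _).intervalIntegrable
    · exact ((hgRmono.comp (monotone_id.add_const _)).monotoneOn _).intervalIntegrable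
    · intro x _; exact hgRmono (by linarith)
  · intro s
    show gR s ≤ F (s + 2) - F (s + 1)
    have hfint : F (s + 2) - F (s + 1) = ∫ t in (s+1)..(s+2), gR t :=
      intervalIntegral.integral_interval_sub_left (hInt 0 (s+2)) (hInt 0 (s+1))
    rw [hfint]
    have h1 : gR s ≤ gR (s+1) := hgRmono (by linarith)
    have h2 : gR (s+1) = ∫ _t in (s+1)..(s+2), gR (s+1) := by
      rw [intervalIntegral.integral_const]; norm_num
    have h3 : (∫ _t in (s+1)..(s+2), gR (s+1)) ≤ ∫ t in (s+1)..(s+2), gR t := by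
      refine intervalIntegral.integral_mono_on (by linarith) intervalIntegrable_const
        (hInt _ _) ?_
      intro x hx; exact hgRmono hx.1
    calc gR s ≤ gR (s+1) := h1
      _ ≤ _ := h2.le.trans h3

/-- RFC iff existence of a continuous increasing bound μ. -/
theorem stmt7 {X : Type*} [NormedAddCommGroup X] [NormedSpace ℝ X]
    {W : Type*} [NormedAddCommGroup W] [NormedSpace ℝ W] (S : System X W) :
    S.RFC ↔ ∃ μ : ℝ≥0 → ℝ≥0 → ℝ≥0,
      Continuous (fun p : ℝ≥0 × ℝ≥0 => μ p.1 p.2) ∧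
      (∀ r₁ r₂ t₁ t₂ : ℝ≥0, r₁ ≤ r₂ → t₁ ≤ t₂ → μ r₁ t₁ ≤ μ r₂ t₂) ∧
      ∀ (x : X), ∀ d ∈ S.Dist, ∀ t : ℝ≥0, ‖S.φ t x d‖₊ ≤ μ ‖x‖₊ t := by
  constructor
  · intro hRFC
    -- the (bounded) supremum of reachable norms
    set NS : ℝ≥0 → Set ℝ≥0 := fun s =>
      {r | ∃ t ≤ s, ∃ d ∈ S.Dist, ∃ x : X, ‖x‖₊ ≤ s ∧ r = ‖S.φ t x d‖₊} with hNS
    have hbdd : ∀ s, BddAbove (NS s) := by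
      intro s
      have h1 : (0:ℝ≥0) < s + 1 := zero_lt_one.trans_le le_add_self
      obtain ⟨C, hC⟩ := isBounded_iff_forall_norm_le.mp (hRFC (s+1) h1 (s+1) h1)
      refine ⟨C.toNNReal, ?_⟩
      rintro r ⟨t, ht, d, hd, x, hx, rfl⟩
      have hy : S.φ t x d ∈ S.RT (s+1) {x : X | ‖x‖₊ ≤ s+1} :=
        ⟨t, ht.trans le_self_add, d, hd, x, hx.trans le_self_add, rfl⟩
      have h2 := hC _ hy
      rw [← norm_toNNReal]
      exact Real.toNNReal_mono h2
    set g : ℝ≥0 → ℝ≥0 := fun s => sSup (NS s) with hg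
    have gmono : Monotone g := by
      intro a b hab
      rcases (NS a).eq_empty_or_nonempty with h | h
      · simp [hg, h]
      · refine csSup_le_csSup (hbdd b) h ?_
        rintro r ⟨t, ht, d, hd, x, hx, rfl⟩
        exact ⟨t, ht.trans hab, d, hd, x, hx.trans hab, rfl⟩
    have gbound : ∀ (x : X), ∀ d ∈ S.Dist, ∀ t : ℝ≥0, ‖S.φ t x d‖₊ ≤ g (‖x‖₊ + t) := by
      intro x d hd t
      exact le_csSup (hbdd _) ⟨t, le_add_self, d, hd, x, le_self_add, rfl⟩
    obtain ⟨f, hfcont, hfmono, hflb⟩ := exists_cont_mono_majorant g gmono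
    refine ⟨fun r t => (f ((r:ℝ) + (t:ℝ))).toNNReal, ?_, ?_, ?_⟩
    · exact continuous_real_toNNReal.comp (hfcont.comp
        ((NNReal.continuous_coe.comp continuous_fst).add
          (NNReal.continuous_coe.comp continuous_snd)))
    · intro r₁ r₂ t₁ t₂ hr ht
      exact Real.toNNReal_mono (hfmono (add_le_add (NNReal.coe_le_coe.mpr hr)
        (NNReal.coe_le_coe.mpr ht)))
    · intro x d hd t
      refine (gbound x d hd t).trans ?_
      have h2 : (g (‖x‖₊ + t) : ℝ) ≤ f ((‖x‖₊:ℝ) + (t:ℝ)) := by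
        have h3 := hflb ((‖x‖₊:ℝ) + (t:ℝ))
        rwa [← NNReal.coe_add, Real.toNNReal_coe] at h3
      calc g (‖x‖₊ + t) = ((g (‖x‖₊ + t) : ℝ)).toNNReal := (Real.toNNReal_coe).symm
        _ ≤ _ := Real.toNNReal_mono h2
  · rintro ⟨μ, _hcont, hmono, hbound⟩ C _hC τ _hτ
    rw [isBounded_iff_forall_norm_le]
    refine ⟨μ C τ, ?_⟩
    rintro y ⟨t, ht, d, hd, x, hx, rfl⟩
    have h1 := (hbound x d hd t).trans (hmono _ _ _ _ hx ht)
    exact_mod_cast h1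
end
end

section
/- Let Σ = (X, 𝒟, φ) be a robustly forward complete system. If there exists a nonempty, bounded, uniformly globally weakly attractive set A ⊆ X, then A is Lagrange stable; in particular Σ is Lagrange stable. -/
open scoped NNReal ENNReal
open Filter Topology Bornology

noncomputable section

/-!
A trajectory starting `ε`-close to `A` stays bounded: if `s ≤ t` is the last time at which it is
`ε`-close to `A`, then `t - s ≤ τ + 1`, since uniform weak attractivity brings the state reached
at time `s + 1` (bounded by robust forward completeness) back to the `ε`-neighbourhood within `τ`.
From the `r`-neighbourhood of `A` every trajectory reaches the `1`-neighbourhood within a uniform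
time, so the largest distance `M r` to `A` reachable from it is finite. `M` is monotone, and
`σ r = r + ∫₀ʳ M (s + 1) ds` is of class `𝒦∞` with `M r ≤ σ r + M 1`.
-/

open Metric Set

section DistanceToSet

variable {X : Type*} [NormedAddCommGroup X] {A s : Set X}

lemma coe_dA (A : Set X) (x : X) : (dA A x : ℝ) = infDist x A :=
  Real.coe_toNNReal _ infDist_nonneg

lemma continuous_dA (A : Set X) : Continuous (dA A) :=
  continuous_real_toNNReal.comp (continuous_infDist_pt A)

lemma isBounded_setOf_dA_le (hA : A.Nonempty) (hAb : IsBounded A) (r : ℝ≥0) :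
    IsBounded {x | dA A x ≤ r} := by
  refine (hAb.thickening (δ := r + 1)).subset fun x hx => ?_
  rw [mem_thickening_iff_infDist_lt hA, ← coe_dA]
  have : dA A x ≤ r := hx
  exact_mod_cast this.trans_lt (lt_add_one r)

lemma Bornology.IsBounded.bddAbove_image_dA (hA : A.Nonempty) (hs : IsBounded s) :
    BddAbove (dA A '' s) := by
  obtain ⟨a, ha⟩ := hA
  obtain ⟨R, hR⟩ := (isBounded_iff_subset_closedBall a).mp hs
  refine ⟨R.toNNReal, ?_⟩
  rintro _ ⟨x, hx, rfl⟩
  exact Real.toNNReal_mono ((infDist_le_dist_of_mem ha).trans (hR hx))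

end DistanceToSet

lemma exists_greatest_le_of_isClosed {Z : Set ℝ≥0} (hZ : IsClosed Z) (h0 : 0 ∈ Z)
    (t : ℝ≥0) :
    ∃ s ∈ Z, s ≤ t ∧ ∀ u ∈ Z, u ≤ t → u ≤ s := by
  have hcpt : IsCompact (Z ∩ Iic t) :=
    (isCompact_Icc (a := 0) (b := t)).of_isClosed_subset (hZ.inter isClosed_Iic)
      fun u hu => ⟨zero_le, hu.2⟩
  obtain ⟨s, ⟨hsZ, hst⟩, hmax⟩ := hcpt.exists_isGreatest ⟨0, h0, zero_le (a := t)⟩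
  exact ⟨s, hsZ, hst, fun u hu hut => hmax ⟨hu, hut⟩⟩

lemma Monotone.exists_classKinf_le_add {M : ℝ≥0 → ℝ≥0} (hM : Monotone M) :
    ∃ σ : ℝ≥0 → ℝ≥0, ClassKinf σ ∧ ∀ r, M r ≤ σ r + M 1 := by
  set f : ℝ → ℝ := fun s => M (s.toNNReal + 1)
  have hf : Monotone f := fun s s' h =>
    NNReal.coe_le_coe.mpr (hM (add_le_add_left (Real.toNNReal_mono h) 1))
  have hf0 : ∀ s, 0 ≤ f s := fun s => (M _).2
  set F : ℝ≥0 → ℝ := fun r => ∫ s in (0 : ℝ)..r, f s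
  have hF0 : ∀ r, 0 ≤ F r := fun r => intervalIntegral.integral_nonneg r.2 fun s _ => hf0 s
  have hFmono : Monotone F := fun r r' h => by
    simp only [F]
    rw [← intervalIntegral.integral_add_adjacent_intervals (b := (r : ℝ)) (c := (r' : ℝ))
      hf.intervalIntegrable hf.intervalIntegrable]
    exact le_add_of_nonneg_right (intervalIntegral.integral_nonneg h fun s _ => hf0 s)
  refine ⟨fun r => r + (F r).toNNReal, ⟨⟨?_, ?_, ?_⟩, ?_⟩, fun r => ?_⟩
  · exact continuous_id.add (continuous_real_toNNReal.comp
      ((intervalIntegral.continuous_primitive (fun _ _ => hf.intervalIntegrable) 0).comp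
        NNReal.continuous_coe))
  · exact fun r r' h => add_lt_add_of_lt_of_le h (Real.toNNReal_mono (hFmono h.le))
  · simp [F]
  · exact fun K => ⟨K + 1, (lt_add_one K).trans_le le_self_add⟩
  rcases le_total r 1 with hr | hr
  · exact (hM hr).trans le_add_self
  have hlast : (M r : ℝ) ≤ ∫ s in (r - 1 : ℝ)..r, f s := by
    have hint : ∫ _ in (r - 1 : ℝ)..r, (M r : ℝ) = M r := by simp
    rw [← hint]
    refine intervalIntegral.integral_mono_on (by linarith) intervalIntegrable_const
      hf.intervalIntegrable fun s hs => NNReal.coe_le_coe.mpr (hM ?_)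
    rw [← NNReal.coe_le_coe, NNReal.coe_add, Real.coe_toNNReal', NNReal.coe_one]
    linarith [hs.1, le_max_left s 0]
  have hsplit : ∫ s in (r - 1 : ℝ)..r, f s ≤ F r := by
    simp only [F]
    rw [← intervalIntegral.integral_add_adjacent_intervals (a := 0) (b := (r - 1 : ℝ)) (c := r)
      hf.intervalIntegrable hf.intervalIntegrable]
    refine le_add_of_nonneg_left (intervalIntegral.integral_nonneg ?_ fun s _ => hf0 s)
    have : (1 : ℝ) ≤ r := by exact_mod_cast hr
    linarith
  calc M r ≤ (F r).toNNReal := by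
        rw [← NNReal.coe_le_coe, Real.coe_toNNReal _ (hF0 r)]; exact hlast.trans hsplit
    _ ≤ r + (F r).toNNReal + M 1 := le_add_self.trans le_self_add

namespace System

variable {X : Type*} [NormedAddCommGroup X] [NormedSpace ℝ X]
variable {W : Type*} [NormedAddCommGroup W] [NormedSpace ℝ W]
variable (S : System X W) {A B : Set X} {x : X} {d : ℝ≥0 → W}

lemma R_mono {B B' : Set X} (h : B ⊆ B') : S.R B ⊆ S.R B' :=
  fun _ ⟨t, d, hd, x, hx, e⟩ => ⟨t, d, hd, x, h hx, e⟩

lemma shift_mem (hd : d ∈ S.Dist) (s : ℝ≥0) : (fun u => d (s + u)) ∈ S.Dist := by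
  simpa only [add_comm s] using S.shift_invariant d hd s

variable {S}

lemma φ_mem_R (hd : d ∈ S.Dist) {s t : ℝ≥0} (hst : s ≤ t) (hs : S.φ s x d ∈ B) :
    S.φ t x d ∈ S.R B :=
  ⟨t - s, _, S.shift_mem hd s, _, hs, by rw [S.cocycle _ _ _ _ hd, add_tsub_cancel_of_le hst]⟩

lemma φ_mem_RT (hd : d ∈ S.Dist) {s t τ : ℝ≥0} (hst : s ≤ t) (htτ : t ≤ s + τ)
    (hs : S.φ s x d ∈ B) : S.φ t x d ∈ S.RT τ B :=
  ⟨t - s, tsub_le_iff_left.mpr htτ, _, S.shift_mem hd s, _, hs,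
    by rw [S.cocycle _ _ _ _ hd, add_tsub_cancel_of_le hst]⟩

lemma RFC.isBounded_RT (hRFC : S.RFC) (hB : IsBounded B) (τ : ℝ≥0) :
    IsBounded (S.RT τ B) := by
  obtain ⟨C, hC⟩ := (isBounded_iff_subset_closedBall 0).mp hB
  refine (hRFC (C.toNNReal + 1) (by positivity) (τ + 1) (by positivity)).subset ?_
  rintro _ ⟨t, ht, d, hd, x, hx, rfl⟩
  refine ⟨t, ht.trans le_self_add, d, hd, x, ?_, rfl⟩
  have hxC : ‖x‖₊ ≤ C.toNNReal := by
    rw [← norm_toNNReal]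
    exact Real.toNNReal_mono (mem_closedBall_zero_iff.mp (hC hx))
  exact hxC.trans le_self_add

lemma bddAbove_dA_R_of_pos
    (hreach : ∀ r τ : ℝ≥0, BddAbove (dA A '' S.RT τ {x | dA A x ≤ r}))
    (hW : S.UGWA A) {ε : ℝ≥0} (hε : 0 < ε) : BddAbove (dA A '' S.R {x | dA A x ≤ ε}) := by
  obtain ⟨M₀, hM₀⟩ := hreach ε 1
  obtain ⟨τ, hτ⟩ := hW ε hε (max M₀ ε) (hε.trans_le (le_max_right _ _))
  obtain ⟨M, hM⟩ := hreach ε (τ + 1)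
  refine ⟨M, ?_⟩
  rintro _ ⟨_, ⟨t, d, hd, x, hx, rfl⟩, rfl⟩
  obtain ⟨s, hsε, hst, hlast⟩ :=
    exists_greatest_le_of_isClosed (Z := {s | dA A (S.φ s x d) ≤ ε})
      (isClosed_le ((continuous_dA A).comp (S.cont x d hd)) continuous_const)
      (by rwa [mem_ofPred, S.identity x d hd]) t
  by_contra hexceeds
  have hts : s + (τ + 1) < t := by
    by_contra! h
    exact hexceeds (hM (mem_image_of_mem _ (φ_mem_RT hd hst h hsε)))
  have hs₁ : dA A (S.φ (s + 1) x d) ≤ max M₀ ε :=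
    le_max_of_le_left (hM₀ (mem_image_of_mem _ (φ_mem_RT hd le_self_add le_rfl hsε)))
  obtain ⟨t', ht'τ, ht'⟩ := hτ _ hs₁ _ (S.shift_mem hd (s + 1))
  rw [S.cocycle _ _ _ _ hd] at ht'
  have : s + 1 + t' ≤ s := hlast _ ht' (by
    calc s + 1 + t' ≤ s + (τ + 1) := by rw [add_assoc, add_comm 1 t']; gcongr
      _ ≤ t := hts.le)
  exact (lt_add_one s).not_ge (le_self_add.trans this)

lemma bddAbove_dA_R
    (hreach : ∀ r τ : ℝ≥0, BddAbove (dA A '' S.RT τ {x | dA A x ≤ r}))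
    (hW : S.UGWA A) (r : ℝ≥0) : BddAbove (dA A '' S.R {x | dA A x ≤ r}) := by
  obtain ⟨M₁, hM₁⟩ := bddAbove_dA_R_of_pos hreach hW one_pos
  obtain ⟨τ, hτ⟩ := hW 1 one_pos (max r 1) (lt_max_of_lt_right one_pos)
  obtain ⟨M, hM⟩ := hreach r τ
  refine ⟨max M M₁, ?_⟩
  rintro _ ⟨_, ⟨t, d, hd, x, hx, rfl⟩, rfl⟩
  obtain ⟨t₁, ht₁τ, ht₁⟩ := hτ x (le_max_of_le_left hx) d hd
  rcases le_total t t₁ with h | h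
  · refine le_max_of_le_left (hM (mem_image_of_mem _ (φ_mem_RT hd zero_le ?_ ?_)))
    · simpa using h.trans ht₁τ
    · rwa [S.identity x d hd]
  · exact le_max_of_le_right (hM₁ (mem_image_of_mem _ (φ_mem_R hd h ht₁)))

end System

/-- RFC plus a bounded uniformly globally weakly attractive set
implies Lagrange stability. -/
theorem stmt8 {X : Type*} [NormedAddCommGroup X] [NormedSpace ℝ X]
    {W : Type*} [NormedAddCommGroup W] [NormedSpace ℝ W] (S : System X W) (hRFC : S.RFC) (A : Set X) (hA : A.Nonempty)
    (hAb : IsBounded A) (hW : S.UGWA A) :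
    S.LagrangeStable A ∧ S.SystemLagrangeStable := by
  have hbdd : ∀ r, BddAbove (dA A '' S.R {x | dA A x ≤ r}) :=
    S.bddAbove_dA_R (fun r τ =>
      (hRFC.isBounded_RT (isBounded_setOf_dA_le hA hAb r) τ).bddAbove_image_dA hA) hW
  set M : ℝ≥0 → ℝ≥0 := fun r => sSup (dA A '' S.R {x | dA A x ≤ r})
  have hM : Monotone M := fun r r' h =>
    csSup_le_csSup' (hbdd r') (image_mono (S.R_mono fun _ hx => le_trans hx h))
  obtain ⟨σ, hσ, hMσ⟩ := hM.exists_classKinf_le_add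
  have hL : S.LagrangeStable A := by
    refine ⟨σ, hσ, M 1 + 1, by positivity, fun x d hd t => ?_⟩
    calc dA A (S.φ t x d) ≤ M (dA A x) :=
          le_csSup (hbdd _) ⟨_, ⟨t, d, hd, x, le_refl (dA A x), rfl⟩, rfl⟩
      _ ≤ σ (dA A x) + M 1 := hMσ _
      _ ≤ σ (dA A x) + (M 1 + 1) := by gcongr; exact le_self_add
  exact ⟨hL, A, hA, hAb, hL⟩
end
end

section
/- Let Σ = (X, 𝒟, φ) be a system and let A ⊆ X be a bounded nonempty invariant set. If A is uniformly globally attractive and Lagrange stable, then A is practically uniformly globally asymptotically stable; in particular Σ is pUGAS. -/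
open scoped NNReal ENNReal
open Filter Topology Bornology

noncomputable section

/-!
Lagrange stability bounds every trajectory starting at distance `r` from `A` by `σ r + c` for
all times, and uniform attractivity with `ε = c` bounds it by `c` after a time `τ r`. Once `τ` is
replaced by a continuous nondecreasing majorant `L`, the function
`β r t = σ r * (1 + L r) / (1 + t)` is of class `𝒦ℒ` and dominates `σ r` as long as `t ≤ L r`,
so `β r t + c` bounds the trajectory before and after time `L r`.
-/

section RampSum

/-- A continuous interpolation of `f`: the term `f n` is switched on linearly while `r` runs
through `[n - 1, n]` (the subtraction is truncated at `0`). -/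
def rampSum (f : ℕ → ℝ≥0) (r : ℝ≥0) : ℝ≥0 :=
  ∑ᶠ n, f n * min 1 (r + 1 - n)

variable (f : ℕ → ℝ≥0)

lemma lt_add_one_of_ramp_ne_zero {r : ℝ≥0} {n : ℕ} (h : f n * min 1 (r + 1 - n) ≠ 0) :
    (n : ℝ≥0) < r + 1 := by
  refine tsub_pos_iff_lt.mp (pos_iff_ne_zero.mpr fun h0 => h ?_)
  rw [h0, min_eq_right zero_le_one, mul_zero]

lemma hasFiniteSupport_ramp (r : ℝ≥0) :
    Function.HasFiniteSupport fun n => f n * min 1 (r + 1 - n) :=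
  (Set.finite_Iio ⌈r + 1⌉₊).subset fun _ hn =>
    Nat.lt_ceil.mpr (lt_add_one_of_ramp_ne_zero f hn)

lemma continuous_rampSum : Continuous (rampSum f) := by
  refine continuous_finsum (fun n => by fun_prop) fun r₀ => ?_
  refine ⟨Set.Iio (r₀ + 1), Iio_mem_nhds (lt_add_one r₀),
    (Set.finite_Iio ⌈r₀ + 2⌉₊).subset ?_⟩
  rintro n ⟨r, hn, hr⟩
  refine Nat.lt_ceil.mpr ((lt_add_one_of_ramp_ne_zero f hn).trans ?_)
  rw [← one_add_one_eq_two, ← add_assoc]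
  exact add_lt_add_left hr 1

lemma monotone_rampSum : Monotone (rampSum f) := fun _ _ h =>
  finsum_le_finsum' (hasFiniteSupport_ramp f _) (hasFiniteSupport_ramp f _) fun _ =>
    mul_le_mul_right (min_le_min le_rfl (tsub_le_tsub_right (add_le_add_left h 1) _)) _

lemma le_rampSum_floor (r : ℝ≥0) : f ⌊r⌋₊ ≤ rampSum f r := by
  have hramp : min 1 (r + 1 - ⌊r⌋₊) = 1 := by
    refine min_eq_left (le_tsub_of_add_le_left ?_)
    exact add_le_add_left (Nat.floor_le r.coe_nonneg) 1
  simpa only [rampSum, hramp, mul_one] using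
    single_le_finsum ⌊r⌋₊ (hasFiniteSupport_ramp f r) fun _ => zero_le

end RampSum

namespace ClassK

variable {γ : ℝ≥0 → ℝ≥0}

lemma mul_monotone (hγ : ClassK γ) {g : ℝ≥0 → ℝ≥0} (hg : Continuous g) (hgm : Monotone g)
    (hg₀ : ∀ r, 0 < g r) : ClassK fun r => γ r * g r := by
  obtain ⟨hγc, hγm, hγ₀⟩ := hγ
  refine ⟨hγc.mul hg, fun r₁ r₂ h => ?_, by simp [hγ₀]⟩
  calc γ r₁ * g r₁ ≤ γ r₁ * g r₂ := mul_le_mul_right (hgm h.le) _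
    _ < γ r₂ * g r₂ := mul_lt_mul_of_pos_right (hγm h) (hg₀ r₂)

lemma classKL_div_one_add (hγ : ClassK γ) : ClassKL fun r t => γ r / (1 + t) := by
  obtain ⟨hγc, hγm, hγ₀⟩ := hγ
  have hpos : ∀ t : ℝ≥0, 0 < 1 + t := fun _ => by positivity
  refine ⟨by fun_prop (disch := exact fun p => (hpos p.2).ne'),
    fun t => ⟨by fun_prop (disch := exact (hpos t).ne'),
      fun _ _ h => div_lt_div_of_pos_right (hγm h) (hpos t), by simp [hγ₀]⟩,
    fun r hr => ⟨fun _ _ h => ?_, ?_⟩⟩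
  · have hγr : 0 < γ r := hγ₀ ▸ hγm hr
    exact div_lt_div_of_pos_left hγr (hpos _) (add_lt_add_right h 1)
  · have hinv : Tendsto (fun t : ℝ≥0 => (1 + t)⁻¹) atTop (𝓝 0) :=
      tendsto_inv_atTop_zero.comp (tendsto_atTop_mono (fun _ => le_add_self) tendsto_id)
    simpa only [div_eq_mul_inv, mul_zero] using hinv.const_mul (γ r)

end ClassK

namespace System

variable {X : Type*} [NormedAddCommGroup X] [NormedSpace ℝ X]
variable {W : Type*} [NormedAddCommGroup W] [NormedSpace ℝ W]

theorem pugasSet_of_ugatt_of_lagrangeStable {S : System X W} {A : Set X} (hatt : S.UGATT A)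
    (hlag : S.LagrangeStable A) : S.PUGASSet A := by
  obtain ⟨σ, ⟨hσ, -⟩, c, hc, hbound⟩ := hlag
  choose τ hτ using fun n : ℕ => hatt c hc (n + 1) n.cast_add_one_pos
  have hpos : ∀ s : ℝ≥0, 0 < 1 + s := fun _ => by positivity
  have hKL := (hσ.mul_monotone ((continuous_rampSum τ).const_add 1)
    ((monotone_rampSum τ).const_add 1) fun _ => hpos _).classKL_div_one_add
  refine ⟨_, hKL, c, hc, fun x d hd t => ?_⟩
  set r := dA A x
  rcases le_total t (rampSum τ r) with ht | ht
  · have hσβ : σ r ≤ σ r * (1 + rampSum τ r) / (1 + t) :=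
      (le_div_iff₀ (hpos t)).mpr (mul_le_mul_right (add_le_add_right ht 1) _)
    exact (hbound x d hd t).trans (add_le_add_left hσβ c)
  · exact (hτ _ x (Nat.lt_floor_add_one r).le d hd t ((le_rampSum_floor τ r).trans ht)).trans
      le_add_self

end System

theorem stmt9_general {X : Type*} [NormedAddCommGroup X] [NormedSpace ℝ X]
    {W : Type*} [NormedAddCommGroup W] [NormedSpace ℝ W] (S : System X W) (A : Set X) (hA : A.Nonempty) (hAb : IsBounded A)
    (hatt : S.UGATT A) (hlag : S.LagrangeStable A) :
    S.PUGASSet A ∧ S.SystemPUGAS :=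
  have hpugas := System.pugasSet_of_ugatt_of_lagrangeStable hatt hlag
  ⟨hpugas, A, hA, hAb, hpugas⟩

/-- a bounded invariant UGATT Lagrange stable set is pUGAS. -/
theorem stmt9 {X : Type*} [NormedAddCommGroup X] [NormedSpace ℝ X]
    {W : Type*} [NormedAddCommGroup W] [NormedSpace ℝ W] (S : System X W) (A : Set X) (hA : A.Nonempty) (hAb : IsBounded A)
    (hinv : S.Invariant A) (hatt : S.UGATT A) (hlag : S.LagrangeStable A) :
    S.PUGASSet A ∧ S.SystemPUGAS :=
  stmt9_general S A hA hAb hatt hlag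
end
end

section
/- Let Σ = (X, 𝒟, φ) be a system and let A ⊆ X be a bounded nonempty invariant set. If A is uniformly globally attractive and uniformly globally stable, then A is uniformly globally asymptotically stable. -/
open scoped NNReal ENNReal
open Filter Topology Bornology

noncomputable section

/-! Normalize the distance to `A` at time `t` by a gain `γ(‖x‖_A)` and take the worst case over
all trajectories and all later times. The resulting function of `t` is bounded, and it tends to
zero uniformly: near `A` stability gives `σ ≤ ε √σ`, far from `A` it gives `σ ≤ ε r σ`, and in
between uniform attractivity applies. A continuous, strictly decreasing majorant `G` of it that
tends to zero yields the `𝒦ℒ` bound `β(r, t) = γ(r) G(t)`. -/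

open Set

lemma ClassK.pos {γ : ℝ≥0 → ℝ≥0} (hγ : ClassK γ) {r : ℝ≥0} (hr : 0 < r) : 0 < γ r :=
  hγ.2.2 ▸ hγ.2.1 hr

lemma ClassK.classKL_mul {γ h : ℝ≥0 → ℝ≥0} (hγ : ClassK γ) (hc : Continuous h)
    (hanti : StrictAnti h) (hlim : Tendsto h atTop (𝓝 0)) : ClassKL fun r t => γ r * h t := by
  have hpos : ∀ t, 0 < h t := fun t => pos_of_gt (hanti (lt_add_one t))
  refine ⟨(hγ.1.comp continuous_fst).mul (hc.comp continuous_snd), fun t => ?_, fun r hr => ?_⟩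
  · exact ⟨hγ.1.mul continuous_const, fun a b hab => mul_lt_mul_of_pos_right (hγ.2.1 hab) (hpos t),
      by simp [hγ.2.2]⟩
  · refine ⟨fun a b hab => mul_lt_mul_of_pos_left (hanti hab) (hγ.pos hr), ?_⟩
    simpa using hlim.const_mul (γ r)

lemma continuous_inv_one_add : Continuous fun t : ℝ≥0 => (1 + t)⁻¹ :=
  (continuous_const.add continuous_id).inv₀ fun t => by simp

lemma strictAnti_inv_one_add : StrictAnti fun t : ℝ≥0 => (1 + t)⁻¹ := fun a b hab => by
  simp only
  gcongr

lemma tendsto_inv_one_add_atTop : Tendsto (fun t : ℝ≥0 => (1 + t)⁻¹) atTop (𝓝 0) := by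
  rw [← NNReal.tendsto_coe]
  push_cast
  exact tendsto_inv_atTop_zero.comp
    (tendsto_atTop_add_const_left _ 1 (NNReal.tendsto_coe_atTop.2 tendsto_id))

section LipschitzEnvelope

variable {g : ℝ≥0 → ℝ≥0}

/-- Subtracting `t - s` makes the supremum 1-Lipschitz in `t`; the terms with `s ≥ t` are `g s`. -/
def lipschitzEnvelope (g : ℝ≥0 → ℝ≥0) (t : ℝ≥0) : ℝ≥0 := ⨆ s, (g s - (t - s))

lemma bddAbove_range_tsub (hb : BddAbove (range g)) (t : ℝ≥0) :
    BddAbove (range fun s => g s - (t - s)) := by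
  obtain ⟨C, hC⟩ := hb
  exact ⟨C, by rintro _ ⟨s, rfl⟩; exact tsub_le_self.trans (hC ⟨s, rfl⟩)⟩

lemma le_lipschitzEnvelope (hb : BddAbove (range g)) (t : ℝ≥0) : g t ≤ lipschitzEnvelope g t :=
  le_ciSup_of_le (bddAbove_range_tsub hb t) t (by simp)

lemma antitone_lipschitzEnvelope (hb : BddAbove (range g)) : Antitone (lipschitzEnvelope g) :=
  fun _ _ h => ciSup_mono (bddAbove_range_tsub hb _) fun s =>
    tsub_le_tsub_left (tsub_le_tsub_right h s) _

lemma lipschitzEnvelope_le_add_nndist (hb : BddAbove (range g)) (t t' : ℝ≥0) :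
    lipschitzEnvelope g t ≤ lipschitzEnvelope g t' + nndist t t' := by
  refine ciSup_le fun s => ?_
  have hshift : t' - s ≤ nndist t t' + (t - s) :=
    tsub_le_tsub_add_tsub.trans (add_le_add
      (show t' - t ≤ nndist t t' by rw [NNReal.nndist_eq]; exact le_max_right _ _) le_rfl)
  calc g s - (t - s) ≤ g s - (t' - s) + nndist t t' := by
        rw [tsub_le_iff_right, add_assoc]
        exact le_tsub_add.trans (add_le_add le_rfl hshift)
    _ ≤ lipschitzEnvelope g t' + nndist t t' :=
        add_le_add (le_ciSup (bddAbove_range_tsub hb t') s) le_rfl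

lemma continuous_lipschitzEnvelope (hb : BddAbove (range g)) :
    Continuous (lipschitzEnvelope g) := by
  refine continuous_induced_rng.2 (LipschitzWith.of_le_add fun t t' => ?_).continuous
  exact_mod_cast lipschitzEnvelope_le_add_nndist hb t t'

lemma tendsto_lipschitzEnvelope (hb : BddAbove (range g)) (hg : Tendsto g atTop (𝓝 0)) :
    Tendsto (lipschitzEnvelope g) atTop (𝓝 0) := by
  obtain ⟨C, hC⟩ := hb
  rw [← bot_eq_zero', nhds_bot_basis_Iic.tendsto_right_iff] at hg ⊢
  intro ε hε
  obtain ⟨T, hT⟩ := eventually_atTop.1 (hg ε hε)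
  refine eventually_atTop.2 ⟨T + C, fun t ht => mem_Iic.2 <| ciSup_le fun s => ?_⟩
  rcases le_total T s with hs | hs
  · exact tsub_le_self.trans (hT s hs)
  · have hgap : g s ≤ t - s :=
      (hC ⟨s, rfl⟩).trans (le_tsub_of_add_le_left ((add_le_add hs le_rfl).trans ht))
    rw [tsub_eq_zero_of_le hgap]
    exact zero_le

end LipschitzEnvelope

/-- `√σ` absorbs the decay near `A`, `r σ` far from `A`, and `σ` keeps the normalized
decay `≤ 1`. -/
def stabilityGain (σ : ℝ≥0 → ℝ≥0) (r : ℝ≥0) : ℝ≥0 := σ r + NNReal.sqrt (σ r) + r * σ r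

lemma le_stabilityGain (σ : ℝ≥0 → ℝ≥0) (r : ℝ≥0) : σ r ≤ stabilityGain σ r :=
  le_self_add.trans le_self_add

lemma sqrt_le_stabilityGain (σ : ℝ≥0 → ℝ≥0) (r : ℝ≥0) : NNReal.sqrt (σ r) ≤ stabilityGain σ r :=
  le_add_self.trans le_self_add

lemma ClassK.stabilityGain {σ : ℝ≥0 → ℝ≥0} (hσ : ClassK σ) : ClassK (stabilityGain σ) := by
  refine ⟨(hσ.1.add (NNReal.continuous_sqrt.comp hσ.1)).add (continuous_id.mul hσ.1),
    fun a b hab => ?_, by simp [_root_.stabilityGain, hσ.2.2]⟩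
  have hσab := hσ.2.1 hab
  exact add_lt_add_of_lt_of_le (add_lt_add hσab (NNReal.sqrt_lt_sqrt.2 hσab))
    (mul_le_mul' hab.le hσab.le)

section TrajectoryFamily

variable {ι : Type*} {v : ι → ℝ≥0 → ℝ≥0} {r : ι → ℝ≥0}

lemma uniform_decay_of_stable_of_attractive {σ : ℝ≥0 → ℝ≥0} (hσ : ClassK σ)
    (hstab : ∀ i t, v i t ≤ σ (r i))
    (hatt : ∀ ε, 0 < ε → ∀ R, 0 < R → ∃ τ, ∀ i, r i ≤ R → ∀ t, τ ≤ t → v i t ≤ ε)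
    {ε : ℝ≥0} (hε : 0 < ε) : ∃ τ, ∀ i t, τ ≤ t → v i t ≤ ε * stabilityGain σ (r i) := by
  have hσ0 : ∀ᶠ ρ in 𝓝 0, σ ρ < ε ^ 2 :=
    hσ.1.tendsto 0 |>.eventually_lt_const (by rw [hσ.2.2]; positivity)
  obtain ⟨δ, hδ, hσδ⟩ := NNReal.nhds_zero_basis.eventually_iff.1 hσ0
  obtain ⟨τ, hτ⟩ := hatt (ε * stabilityGain σ δ) (mul_pos hε (hσ.stabilityGain.pos hδ))
    (ε⁻¹ + 1) (by positivity)
  refine ⟨τ, fun i t ht => ?_⟩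
  rcases lt_or_ge (r i) δ with hsmall | hlarge
  · calc v i t ≤ σ (r i) := hstab i t
      _ = NNReal.sqrt (σ (r i)) * NNReal.sqrt (σ (r i)) := (NNReal.mul_self_sqrt _).symm
      _ ≤ ε * NNReal.sqrt (σ (r i)) := by
          gcongr; exact NNReal.sqrt_le_iff_le_sq.2 (hσδ hsmall).le
      _ ≤ ε * stabilityGain σ (r i) := by gcongr; exact sqrt_le_stabilityGain σ _
  rcases le_total (r i) (ε⁻¹ + 1) with hmedium | hbig
  · calc v i t ≤ ε * stabilityGain σ δ := hτ i hmedium t ht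
      _ ≤ ε * stabilityGain σ (r i) := by gcongr; exact hσ.stabilityGain.2.1.monotone hlarge
  · calc v i t ≤ σ (r i) := hstab i t
      _ = ε * (ε⁻¹ * σ (r i)) := by rw [mul_inv_cancel_left₀ hε.ne']
      _ ≤ ε * (r i * σ (r i)) := by gcongr; exact le_self_add.trans hbig
      _ ≤ ε * stabilityGain σ (r i) := by gcongr; exact le_add_self

lemma exists_classKL_of_uniform_decay {γ : ℝ≥0 → ℝ≥0} (hγ : ClassK γ)
    (hbound : ∀ i t, v i t ≤ γ (r i))
    (hdecay : ∀ ε, 0 < ε → ∃ τ, ∀ i t, τ ≤ t → v i t ≤ ε * γ (r i)) :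
    ∃ β, ClassKL β ∧ ∀ i t, v i t ≤ β (r i) t := by
  set g : ℝ≥0 → ℝ≥0 := fun t => ⨆ p : ι × Ici t, v p.1 p.2 / γ (r p.1)
  have hterm : ∀ i t, v i t / γ (r i) ≤ 1 := fun i t => div_le_one_of_le₀ (hbound i t) zero_le
  have hb : BddAbove (range g) := ⟨1, forall_mem_range.2 fun t => ciSup_le' fun _ => hterm _ _⟩
  have hlim : Tendsto g atTop (𝓝 0) := by
    rw [← bot_eq_zero', nhds_bot_basis_Iic.tendsto_right_iff]
    intro ε hε
    obtain ⟨τ, hτ⟩ := hdecay ε hε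
    exact eventually_atTop.2 ⟨τ, fun t ht => ciSup_le' fun p =>
      div_le_of_le_mul₀ zero_le zero_le (hτ _ _ (ht.trans p.2.2))⟩
  refine ⟨fun ρ t => γ ρ * (lipschitzEnvelope g t + (1 + t)⁻¹),
    hγ.classKL_mul ((continuous_lipschitzEnvelope hb).add continuous_inv_one_add)
      ((antitone_lipschitzEnvelope hb).add_strictAnti strictAnti_inv_one_add)
      (by simpa using (tendsto_lipschitzEnvelope hb hlim).add tendsto_inv_one_add_atTop),
    fun i t => ?_⟩
  have hvg : v i t ≤ γ (r i) * g t := by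
    rcases eq_or_ne (γ (r i)) 0 with h0 | h0
    · simpa [h0] using hbound i t
    · rw [← div_le_iff₀' (pos_iff_ne_zero.2 h0)]
      exact le_ciSup (f := fun p : ι × Ici t => v p.1 p.2 / γ (r p.1))
        ⟨1, forall_mem_range.2 fun _ => hterm _ _⟩ (i, ⟨t, mem_Ici.2 le_rfl⟩)
  exact hvg.trans <|
    mul_le_mul_of_nonneg_left ((le_lipschitzEnvelope hb t).trans le_self_add) zero_le

theorem exists_classKL_of_stable_of_attractive {σ : ℝ≥0 → ℝ≥0} (hσ : ClassK σ)
    (hstab : ∀ i t, v i t ≤ σ (r i))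
    (hatt : ∀ ε, 0 < ε → ∀ R, 0 < R → ∃ τ, ∀ i, r i ≤ R → ∀ t, τ ≤ t → v i t ≤ ε) :
    ∃ β, ClassKL β ∧ ∀ i t, v i t ≤ β (r i) t :=
  exists_classKL_of_uniform_decay hσ.stabilityGain
    (fun i t => (hstab i t).trans (le_stabilityGain σ _))
    fun _ hε => uniform_decay_of_stable_of_attractive hσ hstab hatt hε

end TrajectoryFamily

theorem stmt10_general {X : Type*} [NormedAddCommGroup X] [NormedSpace ℝ X]
    {W : Type*} [NormedAddCommGroup W] [NormedSpace ℝ W] (S : System X W) (A : Set X)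
    (hatt : S.UGATT A) (hugs : S.UGS A) :
    S.UGAS A := by
  obtain ⟨σ, hσ, hstab⟩ := hugs
  obtain ⟨β, hβ, hbound⟩ := exists_classKL_of_stable_of_attractive
    (v := fun (p : X × S.Dist) t => dA A (S.φ t p.1 p.2)) (r := fun p => dA A p.1) hσ.1
    (fun p t => hstab p.1 p.2 p.2.2 t)
    (fun ε hε R hR => (hatt ε hε R hR).imp fun _ hτ p hp t ht => hτ p.1 hp p.2 p.2.2 t ht)
  exact ⟨β, hβ, fun x d hd t => hbound (x, ⟨d, hd⟩) t⟩

/-- a bounded invariant UGATT uniformly globally stable set is UGAS. -/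
theorem stmt10 {X : Type*} [NormedAddCommGroup X] [NormedSpace ℝ X]
    {W : Type*} [NormedAddCommGroup W] [NormedSpace ℝ W] (S : System X W) (A : Set X) (hA : A.Nonempty) (hAb : IsBounded A)
    (hinv : S.Invariant A) (hatt : S.UGATT A) (hugs : S.UGS A) :
    S.UGAS A :=
  stmt10_general S A hatt hugs
end
end

section
/- Let Σ = (X, 𝒟, φ) be a system and let A ⊆ X be bounded and nonempty. If there exists a non-coercive Lyapunov function for Σ with respect to A, then A is uniformly globally weakly attractive. -/
open scoped NNReal ENNReal
open Filter Topology Bornology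

noncomputable section

lemma freq_of_liminf_le {f : ℝ≥0 → ℝ} {l : Filter ℝ≥0} [l.NeBot] {c b : ℝ}
    (hle : Filter.liminf f l ≤ c) (hc0 : c < 0) (hcb : c < b) : ∃ᶠ t in l, f t < b := by
  by_contra hcon
  rw [Filter.not_frequently] at hcon
  have hbmem : b ∈ {a | ∀ᶠ t in l, a ≤ f t} := hcon.mono fun t ht => le_of_not_gt ht
  rw [Filter.liminf_eq] at hle
  by_cases hbdd : BddAbove {a | ∀ᶠ t in l, a ≤ f t}
  · exact absurd (le_csSup hbdd hbmem) (not_le.mpr (lt_of_le_of_lt hle hcb))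
  · rw [Real.sSup_of_not_bddAbove hbdd] at hle
    exact absurd hle (not_le.mpr hc0)

lemma dini_decrease (g : ℝ≥0 → ℝ) (hg : Continuous g) (m : ℝ) (τ : ℝ≥0)
    (H : ∀ s : ℝ≥0, s < τ → ∃ᶠ h in 𝓝[>] (0:ℝ≥0), g (s+h) - g s < m * h) :
    g τ - g 0 ≤ m * τ := by
  set K : Set ℝ≥0 := {s | s ≤ τ ∧ g s - g 0 ≤ m * s} with hK
  have h0 : (0:ℝ≥0) ∈ K := by simp [hK]
  have hKc : IsClosed K := by
    have : K = Set.Iic τ ∩ {s | g s - g 0 ≤ m * s} := rfl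
    rw [this]
    exact isClosed_Iic.inter (isClosed_le (by fun_prop) (by fun_prop))
  have hKb : BddAbove K := ⟨τ, fun s hs => hs.1⟩
  have hmem : sSup K ∈ K := hKc.csSup_mem ⟨0, h0⟩ hKb
  set s₀ := sSup K with hs₀
  rcases eq_or_lt_of_le hmem.1 with heq | hlt
  · rw [← heq]; exact hmem.2
  · exfalso
    have hfreq := H s₀ hlt
    have hev : ∀ᶠ h in 𝓝[>] (0:ℝ≥0), h < τ - s₀ :=
      nhdsWithin_le_nhds (Iio_mem_nhds (by exact tsub_pos_of_lt hlt))
    have hev2 : ∀ᶠ h in 𝓝[>] (0:ℝ≥0), h ∈ Set.Ioi (0:ℝ≥0) := eventually_mem_nhdsWithin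
    obtain ⟨h, h1, h2, h3⟩ := (hfreq.and_eventually (hev.and hev2)).exists
    have hle : s₀ + h ≤ τ := le_of_lt (by rwa [← lt_tsub_iff_left])
    have hmem2 : s₀ + h ∈ K := by
      refine ⟨hle, ?_⟩
      have := hmem.2
      push_cast
      nlinarith [h1]
    have hsup := le_csSup hKb hmem2
    rw [← hs₀] at hsup
    exact absurd hsup (not_le.mpr (lt_add_of_pos_right s₀ h3))


/-- a non-coercive Lyapunov function w.r.t. a bounded nonempty set A
implies uniform global weak attractivity of A. -/
theorem stmt13 {X : Type*} [NormedAddCommGroup X] [NormedSpace ℝ X]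
    {W : Type*} [NormedAddCommGroup W] [NormedSpace ℝ W] (S : System X W) (A : Set X) (hA : A.Nonempty) (hAb : IsBounded A)
    (h : ∃ V : X → ℝ, S.NonCoerciveLyapunov A V) :
    S.UGWA A := by
  obtain ⟨V, hVc, hVnn, hVA, ⟨ψ₂, hψ₂, hψbd⟩, ⟨α, hα, hαdec⟩⟩ := h
  intro ε hε r hr
  set c : ℝ≥0 := α ε with hc
  have hcpos : 0 < c := by
    have h0 := hα.2.1 hε
    rwa [hα.2.2] at h0
  refine ⟨2 * ψ₂ r / c + 1, ?_⟩
  intro x hx d hd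
  by_contra hcon
  push_neg at hcon
  set τ : ℝ≥0 := 2 * ψ₂ r / c + 1 with hτ
  set g : ℝ≥0 → ℝ := fun s => V (S.φ s x d) with hg
  have hgc : Continuous g := hVc.comp (S.cont x d hd)
  have key : ∀ s : ℝ≥0, s < τ →
      ∃ᶠ h' in 𝓝[>] (0:ℝ≥0), g (s + h') - g s < (-(c:ℝ)/2) * h' := by
    intro s hs
    set y := S.φ s x d with hy
    have hyd : ε < dA A y := hcon s (le_of_lt hs)
    have hyA : y ∉ A := by
      intro hyA
      have h0 : dA A y = 0 := by simp [dA, Metric.infDist_zero_of_mem hyA]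
      rw [h0] at hyd
      exact absurd hyd (not_lt.mpr hε.le)
    have hd' : (fun t => d (s + t)) ∈ S.Dist := by
      have := S.shift_invariant d hd s
      convert this using 2 with t
      rw [add_comm]
    have hlim := hαdec y hyA _ hd'
    have hmono : (c:ℝ) ≤ (α (dA A y) : ℝ) := by
      exact_mod_cast hα.2.1.monotone hyd.le
    have hle : Filter.liminf
        (fun t : ℝ≥0 => (V (S.φ t y (fun u => d (s + u))) - V y) / (t:ℝ))
        (𝓝[>] (0:ℝ≥0)) ≤ -(c:ℝ) := le_trans hlim (by linarith)
    have hcR : (0:ℝ) < (c:ℝ) := hcpos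
    have hfreq := freq_of_liminf_le hle (by linarith) (by linarith : -(c:ℝ) < -(c:ℝ)/2)
    refine (hfreq.and_eventually eventually_mem_nhdsWithin).mono ?_
    rintro t ⟨ht1, ht2⟩
    have htpos : (0:ℝ) < (t:ℝ) := by exact_mod_cast ht2
    rw [div_lt_iff₀ htpos] at ht1
    have hco : S.φ t y (fun u => d (s + u)) = S.φ (s + t) x d := S.cocycle s t x d hd
    rw [hco] at ht1
    calc g (s + t) - g s = V (S.φ (s + t) x d) - V y := by rw [hg, hy]
    _ < -(c:ℝ)/2 * t := ht1
  have hdec := dini_decrease g hgc (-(c:ℝ)/2) τ key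
  have hg0 : g 0 = V x := by rw [hg]; simp [S.identity x d hd]
  have hVx : V x ≤ (ψ₂ r : ℝ) := by
    by_cases hxA : x ∈ A
    · rw [hVA x hxA]; positivity
    · exact le_trans (hψbd x hxA).2 (by exact_mod_cast hψ₂.1.2.1.monotone hx)
  have hgτ : 0 ≤ g τ := hVnn _
  have hτval : (ψ₂ r : ℝ) < (c:ℝ)/2 * (τ:ℝ) := by
    rw [hτ]
    push_cast
    have hcR : (0:ℝ) < (c:ℝ) := hcpos
    rw [div_mul_eq_mul_div, lt_div_iff₀ (by norm_num : (0:ℝ) < 2), mul_add,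
      mul_div_assoc', mul_comm (c:ℝ), mul_div_assoc, div_self (ne_of_gt hcR)]
    nlinarith
  rw [hg0] at hdec
  nlinarith
end
end

section
/- Let Σ = (X, 𝒟, φ) be a robustly forward complete system and let A ⊆ X be nonempty, bounded and uniformly globally weakly attractive. Assume that for every ε > 0 there exists δ > 0 with sup_{y ∈ A_δ} ‖y‖_{P₊(A)} < ε, where A_δ := ℛ(B_δ(A)) and P₊(A) := ⋂_{ε>0} A_ε, and assume additionally that A is robustly invariant. Then every uniformly globally attractive set S with A ⊆ S ⊆ P₊(A) is dense in P₊(A) with respect to the norm topology of X. -/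
open scoped NNReal ENNReal
open Filter Topology Bornology

noncomputable section

/-- if additionally A is robustly invariant, every UGATT set between
A and P₊(A) is dense in P₊(A). -/
theorem stmt15 {X : Type*} [NormedAddCommGroup X] [NormedSpace ℝ X]
    {W : Type*} [NormedAddCommGroup W] [NormedSpace ℝ W] (S : System X W) (A : Set X) (hA : A.Nonempty) (hAb : IsBounded A)
    (hRFC : S.RFC) (hW : S.UGWA A)
    (hcont : ∀ ε : ℝ≥0, 0 < ε → ∃ δ : ℝ≥0, 0 < δ ∧
      (⨆ y ∈ S.R (ballSet δ A), (dA (S.Pplus A) y : ℝ≥0∞)) < (ε : ℝ≥0∞))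
    (hrob : S.RobustlyInvariant A) :
    ∀ T : Set X, A ⊆ T → T ⊆ S.Pplus A → S.UGATT T → S.Pplus A ⊆ closure T := by
  intro T hAT hTP hU x hx
  have hTne : T.Nonempty := hA.mono hAT
  have hdmono : ∀ y : X, dA T y ≤ dA A y := by
    intro y
    exact Real.toNNReal_mono (Metric.infDist_le_infDist_of_subset hAT hA)
  have key : ∀ ε : ℝ≥0, 0 < ε → dA T x ≤ ε := by
    intro ε hε
    obtain ⟨τ, hτ⟩ := hU ε hε 1 one_pos
    obtain ⟨δ, hδ, hrobδ⟩ := hrob.2 ε hε (τ + 1) (by positivity)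
    have hδ1 : (0 : ℝ≥0) < min δ 1 := lt_min hδ one_pos
    simp only [System.Pplus, Set.mem_iInter] at hx
    obtain ⟨t, d, hd, x₀, hx₀, heq⟩ := hx (min δ 1) hδ1
    have hx₀A : dA A x₀ < min δ 1 := hx₀
    subst heq
    by_cases ht : t ≤ τ + 1
    · calc dA T (S.φ t x₀ d) ≤ dA A (S.φ t x₀ d) := hdmono _
        _ ≤ ε := hrobδ t ht x₀ (hx₀A.le.trans (min_le_left _ _)) d hd
    · exact hτ x₀ ((hdmono x₀).trans (hx₀A.le.trans (min_le_right _ _))) d hd t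
        (le_trans (le_add_right le_rfl) (le_of_not_ge ht))
  have hzero : dA T x = 0 := by
    by_contra h
    have hpos : 0 < dA T x := pos_iff_ne_zero.2 h
    have := key (dA T x / 2) (by positivity)
    have hhalf : dA T x / 2 < dA T x := NNReal.half_lt_self h
    exact absurd this (not_le.2 hhalf)
  rw [Metric.mem_closure_iff_infDist_zero hTne]
  have : (Metric.infDist x T).toNNReal = 0 := hzero
  have hn := Metric.infDist_nonneg (x := x) (s := T)
  rw [Real.toNNReal_eq_zero] at this
  linarith
end
end

section
/- Let Σ = (X, 𝒟, φ) be a system and let A ⊆ X be nonempty and closed. Then A is uniformly globally attractive and robustly invariant if and only if A is uniformly (locally) stable and uniformly globally weakly attractive. -/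
open scoped NNReal ENNReal
open Filter Topology Bornology

noncomputable section

/-- A is UGATT and robustly invariant iff A is uniformly stable and
uniformly globally weakly attractive. -/
theorem stmt17 {X : Type*} [NormedAddCommGroup X] [NormedSpace ℝ X]
    {W : Type*} [NormedAddCommGroup W] [NormedSpace ℝ W] (S : System X W) (A : Set X) (hA : A.Nonempty) (hAc : IsClosed A) :
    (S.UGATT A ∧ S.RobustlyInvariant A) ↔ (S.ULS A ∧ S.UGWA A) := by
  constructor
  · rintro ⟨hatt, hinv, hrob⟩
    constructor
    · -- ULS
      intro ε hε
      obtain ⟨τ, hτ⟩ := hatt ε hε ε hε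
      obtain ⟨δ₀, hδ₀, hrb⟩ := hrob ε hε (τ + 1) (by positivity)
      refine ⟨min δ₀ ε, lt_min hδ₀ hε, ?_⟩
      intro x hx d hd t
      rcases le_total t τ with h | h
      · exact hrb t (h.trans le_self_add) x (hx.trans (min_le_left _ _)) d hd
      · exact hτ x (hx.trans (min_le_right _ _)) d hd t h
    · -- UGWA
      intro ε hε r hr
      obtain ⟨τ, hτ⟩ := hatt ε hε r hr
      exact ⟨τ, fun x hx d hd => ⟨τ, le_rfl, hτ x hx d hd τ le_rfl⟩⟩
  · rintro ⟨huls, hugwa⟩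
    have key : ∀ x ∈ A, ∀ d ∈ S.Dist, ∀ t, S.φ t x d ∈ A := by
      intro x hx d hd t
      have h0 : dA A x = 0 := by
        simp [dA, Metric.infDist_zero_of_mem hx]
      have hle : ∀ ε : ℝ≥0, 0 < ε → dA A (S.φ t x d) ≤ ε := by
        intro ε hε
        obtain ⟨δ, hδ, h⟩ := huls ε hε
        exact h x (by simp [h0]) d hd t
      have h1 : dA A (S.φ t x d) = 0 := by
        by_contra hne
        have hpos : 0 < dA A (S.φ t x d) := pos_iff_ne_zero.mpr hne
        have := hle (dA A (S.φ t x d) / 2) (by positivity)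
        exact absurd this (not_le.mpr (NNReal.half_lt_self hne))
      have h2 : Metric.infDist (S.φ t x d) A = 0 := by
        have := Metric.infDist_nonneg (x := S.φ t x d) (s := A)
        have h3 : (Metric.infDist (S.φ t x d) A).toNNReal = 0 := h1
        rw [Real.toNNReal_eq_zero] at h3
        linarith
      exact (hAc.mem_iff_infDist_zero hA).2 h2
    refine ⟨?_, ?_, ?_⟩
    · -- UGATT
      intro ε hε r hr
      obtain ⟨δ, hδ, hδs⟩ := huls ε hε
      obtain ⟨τ, hτ⟩ := hugwa δ hδ r hr
      refine ⟨τ, fun x hx d hd t ht => ?_⟩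
      obtain ⟨t₁, ht₁τ, ht₁⟩ := hτ x hx d hd
      have ht₁t : t₁ ≤ t := ht₁τ.trans ht
      have hco := S.cocycle t₁ (t - t₁) x d hd
      rw [add_tsub_cancel_of_le ht₁t] at hco
      rw [← hco]
      have hsh : (fun s => d (t₁ + s)) ∈ S.Dist := by
        have := S.shift_invariant d hd t₁
        simpa [add_comm] using this
      exact hδs _ ht₁ _ hsh _
    · -- Invariant
      rintro y ⟨t, d, hd, x, hx, rfl⟩
      exact key x hx d hd t
    · -- robust invariance ε–δ clause
      intro ε hε h hh
      obtain ⟨δ, hδ, hs⟩ := huls ε hε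
      exact ⟨δ, hδ, fun t _ x hx d hd => hs x hx d hd t⟩
end
end
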